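/- arXiv:2501.07588 — 2 statements merged into one kernel-verified Lean document; each statement's English description precedes it below -/
import Mathlib

section
/- For every finite set of formulas Γ = {B₁, ..., Bₙ} and every formula A of intuitionistic propositional logic, if A is derivable from the open assumptions Γ in Gentzen's 1935 natural deduction calculus (Γ ⊢₃₅ A), then the sequent B₁, ..., Bₙ ⇒ A is derivable in Gentzen's 1936 sequential natural deduction calculus (⊢₃₆ Γ ⇒ A). -/
/-- Formulas of intuitionistic propositional logic: atoms, ⊥, ∧, ∨, →.
Negation is defined by ¬A := A → ⊥. -/
inductive PropForm : Type
  | atom : ℕ → PropForm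
  | bot  : PropForm
  | conj : PropForm → PropForm → PropForm
  | disj : PropForm → PropForm → PropForm
  | impl : PropForm → PropForm → PropForm
  deriving DecidableEq

open PropForm

/-- Gentzen's 1935 natural deduction derivability relation `Γ ⊢₃₅ A`,
with `Γ` a finite set of open assumptions. -/
inductive Nd35 : Finset PropForm → PropForm → Prop
  | assumption (A : PropForm) : Nd35 {A} A
  | exFalso {Γ : Finset PropForm} {A : PropForm} :
      Nd35 Γ bot → Nd35 Γ A
  | andIntro {Γ Δ : Finset PropForm} {A B : PropForm} :
      Nd35 Γ A → Nd35 Δ B → Nd35 (Γ ∪ Δ) (conj A B)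
  | andElimLeft {Γ : Finset PropForm} {A B : PropForm} :
      Nd35 Γ (conj A B) → Nd35 Γ A
  | andElimRight {Γ : Finset PropForm} {A B : PropForm} :
      Nd35 Γ (conj A B) → Nd35 Γ B
  | implIntro {Γ : Finset PropForm} {A B : PropForm} :
      Nd35 (insert A Γ) B → Nd35 Γ (impl A B)
  | implElim {Γ Δ : Finset PropForm} {A B : PropForm} :
      Nd35 Γ (impl A B) → Nd35 Δ A → Nd35 (Γ ∪ Δ) B
  | orIntroLeft {Γ : Finset PropForm} {A B : PropForm} :
      Nd35 Γ A → Nd35 Γ (disj A B)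
  | orIntroRight {Γ : Finset PropForm} {A B : PropForm} :
      Nd35 Γ B → Nd35 Γ (disj A B)
  | orElim {Γ Δ Θ : Finset PropForm} {A B C : PropForm} :
      Nd35 Γ (disj A B) → Nd35 (insert A Δ) C → Nd35 (insert B Θ) C →
      Nd35 (Γ ∪ Δ ∪ Θ) C

/-- Gentzen's 1936 sequential natural deduction relation `⊢₃₆ Γ ⇒ A`,
with `Γ` a finite multiset of formulas (exchange is built into the
multiset representation). -/
inductive Nd36 : Multiset PropForm → PropForm → Prop
  | id (A : PropForm) : Nd36 {A} A
  | contraction {Γ : Multiset PropForm} {A B : PropForm} :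
      Nd36 (A ::ₘ A ::ₘ Γ) B → Nd36 (A ::ₘ Γ) B
  | weakening {Γ : Multiset PropForm} {A B : PropForm} :
      Nd36 Γ B → Nd36 (A ::ₘ Γ) B
  | exFalso {Γ : Multiset PropForm} {A : PropForm} :
      Nd36 Γ bot → Nd36 Γ A
  | andIntro {Γ Δ : Multiset PropForm} {A B : PropForm} :
      Nd36 Γ A → Nd36 Δ B → Nd36 (Γ + Δ) (conj A B)
  | andElimLeft {Γ : Multiset PropForm} {A B : PropForm} :
      Nd36 Γ (conj A B) → Nd36 Γ A
  | andElimRight {Γ : Multiset PropForm} {A B : PropForm} :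
      Nd36 Γ (conj A B) → Nd36 Γ B
  | implIntro {Γ : Multiset PropForm} {A B : PropForm} :
      Nd36 (A ::ₘ Γ) B → Nd36 Γ (impl A B)
  | implElim {Γ Δ : Multiset PropForm} {A B : PropForm} :
      Nd36 Γ (impl A B) → Nd36 Δ A → Nd36 (Γ + Δ) B
  | orIntroLeft {Γ : Multiset PropForm} {A B : PropForm} :
      Nd36 Γ A → Nd36 Γ (disj A B)
  | orIntroRight {Γ : Multiset PropForm} {A B : PropForm} :
      Nd36 Γ B → Nd36 Γ (disj A B)
  | orElim {Γ Δ Θ : Multiset PropForm} {A B C : PropForm} :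
      Nd36 Γ (disj A B) → Nd36 (A ::ₘ Δ) C → Nd36 (B ::ₘ Θ) C →
      Nd36 (Γ + Δ + Θ) C

lemma nd36_weak_many {Γ : Multiset PropForm} {A : PropForm} (Δ : Multiset PropForm)
    (h : Nd36 Γ A) : Nd36 (Δ + Γ) A := by
  induction Δ using Multiset.induction with
  | empty => simpa using h
  | cons x Δ ih => simpa [Multiset.cons_add] using Nd36.weakening ih

lemma nd36_contract_mem {Δ : Multiset PropForm} {x : PropForm} {A : PropForm}
    (hx : x ∈ Δ) (h : Nd36 (x ::ₘ Δ) A) : Nd36 Δ A := by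
  obtain ⟨Δ', rfl⟩ := Multiset.exists_cons_of_mem hx
  exact Nd36.contraction h

lemma nd36_absorb {Γ Δ : Multiset PropForm} {A : PropForm}
    (h : Nd36 (Γ + Δ) A) (hsub : ∀ x ∈ Γ, x ∈ Δ) : Nd36 Δ A := by
  induction Γ using Multiset.induction with
  | empty => simpa using h
  | cons x Γ ih =>
    apply ih
    · apply nd36_contract_mem (x := x)
      · exact Multiset.mem_add.2 (Or.inr (hsub x (Multiset.mem_cons_self _ _)))
      · simpa [Multiset.cons_add] using h
    · exact fun y hy => hsub y (Multiset.mem_cons_of_mem hy)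

lemma nd36_mono {Γ Δ : Multiset PropForm} {A : PropForm}
    (h : Nd36 Γ A) (hsub : ∀ x ∈ Γ, x ∈ Δ) : Nd36 Δ A :=
  nd36_absorb (by simpa [add_comm] using nd36_weak_many Δ h) hsub

/-- If `Γ ⊢₃₅ A` then `⊢₃₆ Γ ⇒ A` (with the finite set `Γ` read as a multiset). -/
theorem nd35_to_nd36 (Γ : Finset PropForm) (A : PropForm) (h : Nd35 Γ A) :
    Nd36 Γ.val A := by
  induction h with
  | assumption A => exact Nd36.id A
  | exFalso _ ih => exact Nd36.exFalso ih
  | andIntro _ _ ih1 ih2 =>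
    exact nd36_mono (Nd36.andIntro ih1 ih2) (by intro x hx; simp at hx ⊢; tauto)
  | andElimLeft _ ih => exact Nd36.andElimLeft ih
  | andElimRight _ ih => exact Nd36.andElimRight ih
  | implIntro _ ih =>
    exact Nd36.implIntro (nd36_mono ih (by intro x hx; simp at hx ⊢; tauto))
  | implElim _ _ ih1 ih2 =>
    exact nd36_mono (Nd36.implElim ih1 ih2) (by intro x hx; simp at hx ⊢; tauto)
  | orIntroLeft _ ih => exact Nd36.orIntroLeft ih
  | orIntroRight _ ih => exact Nd36.orIntroRight ih
  | @orElim Γ' Δ' Θ' A' B' C' _ _ _ ih1 ih2 ih3 =>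
    refine nd36_mono (Nd36.orElim (Δ := Δ'.val) (Θ := Θ'.val) ih1
      (nd36_mono ih2 ?_) (nd36_mono ih3 ?_)) ?_ <;>
      (intro x hx; simp at hx ⊢; tauto)
end

section
/- For every finite multiset of formulas Γ and every formula A of intuitionistic propositional logic, if the sequent Γ ⇒ A is derivable in Gentzen's 1936 sequential natural deduction calculus (⊢₃₆ Γ ⇒ A), then A is derivable from the open assumptions in (the underlying set of) Γ in Gentzen's 1935 natural deduction calculus (Γ ⊢₃₅ A). -/
open PropForm

-- There is no weakening rule in the 1935 calculus: a vacuous ∧-introduction followed by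
-- ∧-elimination adds an unused open assumption.
theorem Nd35.weaken {Γ : Finset PropForm} {A : PropForm} (B : PropForm) (h : Nd35 Γ A) :
    Nd35 (insert B Γ) A := by
  rw [Finset.insert_eq, Finset.union_comm]
  exact (h.andIntro (.assumption B)).andElimLeft

/-- If `⊢₃₆ Γ ⇒ A` then `A` is derivable in 1935 natural deduction from the
underlying set of the multiset `Γ`. -/
theorem nd36_to_nd35 (Γ : Multiset PropForm) (A : PropForm) (h : Nd36 Γ A) :
    Nd35 Γ.toFinset A := by
  induction h with
  | id A => simpa using Nd35.assumption A
  | contraction _ ih => simpa using ih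
  | weakening _ ih => simpa using ih.weaken _
  | exFalso _ ih => exact ih.exFalso
  | andIntro _ _ ih₁ ih₂ => simpa using ih₁.andIntro ih₂
  | andElimLeft _ ih => exact ih.andElimLeft
  | andElimRight _ ih => exact ih.andElimRight
  | implIntro _ ih => exact .implIntro (by simpa using ih)
  | implElim _ _ ih₁ ih₂ => simpa using ih₁.implElim ih₂
  | orIntroLeft _ ih => exact ih.orIntroLeft
  | orIntroRight _ ih => exact ih.orIntroRight
  | orElim _ _ _ ih₁ ih₂ ih₃ =>
    simpa using ih₁.orElim (by simpa using ih₂) (by simpa using ih₃)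
end
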